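/- Let Γ be a group generated by a finite symmetric set S. If for every s ∈ S the growth function n ↦ |Cl(s) ∩ B_n| is subexponential (i.e., for every c > 1, |Cl(s) ∩ B_n| / cⁿ → 0), then the quotient group Γ/Z(Γ) has subexponential growth (with respect to the image of S). -/

import Mathlib

/-! Conjugating the generators, `gZ(Γ) ↦ (g⁻¹ s g)_{s ∈ S}`, is injective on `Γ/Z(Γ)`, since an
element commuting with every generator is central. A coset with a representative in `B_n` is
sent into `∏_{s ∈ S} (Cl(s) ∩ B_{2n+1})`, so the growth of `Γ/Z(Γ)` is bounded by a finite product
of subexponential functions evaluated at `2n + 1`, which is again subexponential. -/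

open Filter Topology

def wordBall {Γ : Type*} [Group Γ] (S : Set Γ) (n : ℕ) : Set Γ :=
  {g | ∃ l : List Γ, l.length ≤ n ∧ (∀ x ∈ l, x ∈ S) ∧ l.prod = g}

noncomputable def wlen {Γ : Type*} [Group Γ] (S : Set Γ) (g : Γ) : ℕ :=
  sInf {n | g ∈ wordBall S n}

def conjClass {Γ : Type*} [Group Γ] (h : Γ) : Set Γ := {y | ∃ g : Γ, g⁻¹ * h * g = y}

noncomputable def cosetLen {Γ : Type*} [Group Γ] (S : Set Γ) (C : Subgroup Γ)
    (x : Γ ⧸ C) : ℕ :=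
  sInf {n | ∃ g : Γ, (QuotientGroup.mk g : Γ ⧸ C) = x ∧ wlen S g ≤ n}

def schreierBall {Γ : Type*} [Group Γ] (S : Set Γ) (C : Subgroup Γ) (n : ℕ) :
    Set (Γ ⧸ C) := {x | cosetLen S C x ≤ n}

/-- A function `f : ℕ → ℕ` is subexponential if `f n / c ^ n → 0` for every `c > 1`. -/
def Subexp (f : ℕ → ℕ) : Prop :=
  ∀ c : ℝ, 1 < c → Tendsto (fun n => (f n : ℝ) / c ^ n) atTop (nhds 0)

open Subgroup

namespace Subexp

variable {f g : ℕ → ℕ}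

theorem of_le (hg : Subexp g) (hfg : ∀ n, f n ≤ g n) : Subexp f := fun c hc =>
  squeeze_zero (fun n => by positivity)
    (fun n => div_le_div_of_nonneg_right (by exact_mod_cast hfg n) (by positivity)) (hg c hc)

theorem one : Subexp 1 := fun c hc => by
  simpa [one_div, ← inv_pow] using
    tendsto_pow_atTop_nhds_zero_of_lt_one (by positivity) (inv_lt_one_of_one_lt₀ hc)

theorem mul (hf : Subexp f) (hg : Subexp g) : Subexp (f * g) := fun c hc => by
  have hd : 1 < √c := Real.lt_sqrt_of_sq_lt (by nlinarith)
  have hc' : ∀ n, c ^ n = √c ^ n * √c ^ n := fun n => by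
    rw [← mul_pow, Real.mul_self_sqrt (by positivity)]
  simpa [hc', mul_div_mul_comm] using (hf _ hd).mul (hg _ hd)

theorem prod {ι : Type*} (s : Finset ι) {F : ι → ℕ → ℕ} (hF : ∀ i ∈ s, Subexp (F i)) :
    Subexp (fun n => ∏ i ∈ s, F i n) := by
  simpa only [← Finset.prod_apply] using Finset.prod_induction F Subexp (fun _ _ => mul) one hF

theorem comp_mul_add (hf : Subexp f) {k : ℕ} (hk : 0 < k) (b : ℕ) :
    Subexp (fun n => f (k * n + b)) := fun c hc => by
  set d := c ^ (k⁻¹ : ℝ)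
  have hc0 : 0 < c := by positivity
  have hd : 1 < d := Real.one_lt_rpow hc (by positivity)
  have hdk : d ^ k = c := by
    rw [← Real.rpow_natCast, ← Real.rpow_mul hc0.le, inv_mul_cancel₀ (by positivity),
      Real.rpow_one]
  have hlin : Tendsto (fun n => k * n + b) atTop atTop :=
    tendsto_atTop_mono (fun n => le_add_right (Nat.le_mul_of_pos_left n hk)) tendsto_id
  have hlim := ((hf d hd).comp hlin).const_mul (d ^ b)
  rw [mul_zero] at hlim
  refine hlim.congr fun n => ?_
  simp only [Function.comp_apply, pow_add, pow_mul, hdk]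
  field_simp

end Subexp

section WordBall

variable {Γ : Type*} [Group Γ] {S : Set Γ}

theorem wordBall_mono {m n : ℕ} (h : m ≤ n) : wordBall S m ⊆ wordBall S n :=
  fun _ ⟨l, hl, hS, hp⟩ => ⟨l, hl.trans h, hS, hp⟩

theorem mem_wordBall_one {s : Γ} (hs : s ∈ S) : s ∈ wordBall S 1 :=
  ⟨[s], by simp, by simpa using hs, by simp⟩

theorem mul_mem_wordBall {g h : Γ} {m n : ℕ} (hg : g ∈ wordBall S m) (hh : h ∈ wordBall S n) :
    g * h ∈ wordBall S (m + n) := by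
  obtain ⟨l, hl, hS, rfl⟩ := hg
  obtain ⟨l', hl', hS', rfl⟩ := hh
  exact ⟨l ++ l', by simpa using add_le_add hl hl',
    fun x hx => (List.mem_append.mp hx).elim (hS x) (hS' x), List.prod_append⟩

theorem inv_mem_wordBall (hsym : S⁻¹ = S) {g : Γ} {n : ℕ} (hg : g ∈ wordBall S n) :
    g⁻¹ ∈ wordBall S n := by
  obtain ⟨l, hl, hS, rfl⟩ := hg
  refine ⟨(l.map (·⁻¹)).reverse, by simpa using hl, ?_, List.prod_inv_reverse l |>.symm⟩
  simp only [List.mem_reverse, List.mem_map, forall_exists_index, and_imp]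
  rintro _ x hx rfl
  rw [← hsym]
  exact Set.inv_mem_inv.mpr (hS x hx)

theorem conj_mem_wordBall (hsym : S⁻¹ = S) {s g : Γ} {n : ℕ} (hs : s ∈ S)
    (hg : g ∈ wordBall S n) : g⁻¹ * s * g ∈ wordBall S (2 * n + 1) := by
  have := mul_mem_wordBall (mul_mem_wordBall (inv_mem_wordBall hsym hg) (mem_wordBall_one hs)) hg
  rwa [show n + 1 + n = 2 * n + 1 by ring] at this

theorem wordBall_finite [Finite S] (n : ℕ) : (wordBall S n).Finite := by
  refine ((List.finite_length_le S n).image fun l => (l.map Subtype.val).prod).subset ?_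
  rintro _ ⟨l, hl, hS, rfl⟩
  lift l to List S using hS
  exact ⟨l, by simpa using hl, rfl⟩

theorem exists_mem_wordBall (hsym : S⁻¹ = S) (hgen : closure S = ⊤) (g : Γ) :
    ∃ n, g ∈ wordBall S n := by
  have hmon : (closure S).toSubmonoid = Submonoid.closure S := by
    rw [closure_toSubmonoid, hsym, Set.union_self]
  have hg : g ∈ Submonoid.closure S := hmon ▸ hgen ▸ mem_top g
  obtain ⟨l, hS, rfl⟩ := Submonoid.exists_list_of_mem_closure hg
  exact ⟨l.length, l, le_rfl, hS, rfl⟩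

theorem mem_wordBall_wlen (hsym : S⁻¹ = S) (hgen : closure S = ⊤) (g : Γ) :
    g ∈ wordBall S (wlen S g) :=
  Nat.sInf_mem (exists_mem_wordBall hsym hgen g)

theorem exists_mk_eq_of_mem_schreierBall (hsym : S⁻¹ = S) (hgen : closure S = ⊤)
    {C : Subgroup Γ} {n : ℕ} {x : Γ ⧸ C} (hx : x ∈ schreierBall S C n) :
    ∃ g ∈ wordBall S n, (g : Γ ⧸ C) = x := by
  obtain ⟨g, rfl, hg⟩ := Nat.sInf_mem (s := {n | ∃ g : Γ, (g : Γ ⧸ C) = x ∧ wlen S g ≤ n})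
    ⟨_, x.out, QuotientGroup.out_eq' x, le_rfl⟩
  exact ⟨g, wordBall_mono (hg.trans hx) (mem_wordBall_wlen hsym hgen g), rfl⟩

end WordBall

section Conj

variable {Γ : Type*} [Group Γ]

theorem inv_mul_mul_eq_inv_mul_mul_iff {g h s : Γ} :
    g⁻¹ * s * g = h⁻¹ * s * h ↔ s * (h * g⁻¹) = h * g⁻¹ * s := by
  constructor <;> intro e
  · calc s * (h * g⁻¹) = h * (h⁻¹ * s * h) * g⁻¹ := by group
      _ = h * g⁻¹ * s := by rw [← e]; group
  · calc g⁻¹ * s * g = h⁻¹ * (h * g⁻¹ * s) * g := by group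
      _ = h⁻¹ * s * h := by rw [← e]; group

def conjTuple (S : Set Γ) : Γ ⧸ center Γ → S → Γ :=
  Quotient.lift (fun g (s : S) => g⁻¹ * s * g) fun _ _ hgh => funext fun s =>
    inv_mul_mul_eq_inv_mul_mul_iff.mpr <| mem_center_iff.mp
      ((center Γ).normal_of_characteristic.mem_comm (QuotientGroup.leftRel_apply.mp hgh)) s

theorem conjTuple_injective {S : Set Γ} (hgen : closure S = ⊤) :
    Function.Injective (conjTuple S) := by
  intro x y hxy
  induction x using QuotientGroup.induction_on with | H g => ?_
  induction y using QuotientGroup.induction_on with | H h => ?_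
  have hcen : center Γ = centralizer S := by
    rw [← centralizer_univ, ← coe_top, ← hgen, centralizer_closure]
  refine (QuotientGroup.eq_iff_div_mem.mpr ?_).symm
  rw [hcen, div_eq_mul_inv, mem_centralizer_iff]
  exact fun s hs => inv_mul_mul_eq_inv_mul_mul_iff.mp (congrFun hxy ⟨s, hs⟩)

end Conj

theorem ncard_schreierBall_center_le_prod {Γ : Type*} [Group Γ] (S : Finset Γ)
    (hsym : (S : Set Γ)⁻¹ = S) (hgen : closure (S : Set Γ) = ⊤) (n : ℕ) :
    (schreierBall (S : Set Γ) (center Γ) n).ncard ≤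
      ∏ s ∈ S, (conjClass s ∩ wordBall (S : Set Γ) (2 * n + 1)).ncard := by
  set T : S → Set Γ := fun s => conjClass (s : Γ) ∩ wordBall (S : Set Γ) (2 * n + 1)
  have hmaps : Set.MapsTo (conjTuple (S : Set Γ)) (schreierBall S (center Γ) n)
      (Set.univ.pi T) := by
    intro x hx s _
    obtain ⟨g, hg, rfl⟩ := exists_mk_eq_of_mem_schreierBall hsym hgen hx
    exact ⟨⟨g, rfl⟩, conj_mem_wordBall hsym s.2 hg⟩
  have hfin : (Set.univ.pi T).Finite :=
    Set.Finite.pi fun _ => (wordBall_finite _).subset Set.inter_subset_right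
  calc (schreierBall (S : Set Γ) (center Γ) n).ncard
      ≤ (Set.univ.pi T).ncard :=
        Set.ncard_le_ncard_of_injOn _ hmaps (conjTuple_injective hgen).injOn hfin
    _ = ∏ s : S, (T s).ncard := by
        simp only [← Nat.card_coe_set_eq, Nat.card_congr (Equiv.Set.univPi T), Nat.card_pi]
    _ = ∏ s ∈ S, (conjClass s ∩ wordBall (S : Set Γ) (2 * n + 1)).ncard :=
        Finset.prod_coe_sort S fun s => (conjClass s ∩ wordBall (S : Set Γ) (2 * n + 1)).ncard

/-- If every generator has a conjugacy class of subexponential growth, then the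
quotient of `Γ` by its center has subexponential growth. -/
theorem stmt4 (Γ : Type*) [Group Γ] (S : Finset Γ) (hsym : (S : Set Γ)⁻¹ = (S : Set Γ))
    (hgen : Subgroup.closure (S : Set Γ) = ⊤)
    (hcl : ∀ s ∈ S, Subexp (fun n => (conjClass s ∩ wordBall (S : Set Γ) n).ncard)) :
    Subexp (fun n => (schreierBall (S : Set Γ) (Subgroup.center Γ) n).ncard) :=
  (Subexp.prod S fun s hs => (hcl s hs).comp_mul_add two_pos 1).of_le
    (ncard_schreierBall_center_le_prod S hsym hgen)
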